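/- Let n ≥ 3 and let A be an n×n real Higham² matrix with P = D = I, i.e. A = [[L̂, 0],[−𝟏ᵀ, 1]]·[[Û, u],[0, 2^{n−1}]] where L̂ is the (n−1)×(n−1) lower unitriangular matrix with all strictly lower entries −1, Û is an invertible (n−1)×(n−1) upper triangular matrix, u = (1, 2, 4, …, 2^{n−2})ᵀ, and 𝟏 is the all-ones vector. Fix ε ∈ ℝ with ε + 2^{−(n−3)}·Û_{n−1,n−1} ≠ 0, and suppose A + ε·e_1 e_{n−1}ᵀ admits an LU factorization with last pivot p_ε^{(1,n−1)}. Then p_ε^{(1,n−1)} = 4·Û_{n−1,n−1} / (ε + 2^{−(n−3)}·Û_{n−1,n−1}). -/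

import Mathlib

open Matrix

/-- `M` is lower triangular with all diagonal entries equal to `1`. -/
def IsLowerUnitri {k : ℕ} (M : Matrix (Fin k) (Fin k) ℝ) : Prop :=
  (∀ i, M i i = 1) ∧ ∀ i j : Fin k, i < j → M i j = 0

/-- `M` is upper triangular. -/
def IsUpperTri {k : ℕ} (M : Matrix (Fin k) (Fin k) ℝ) : Prop :=
  ∀ i j : Fin k, j < i → M i j = 0

/-- The `m × m` lower unitriangular matrix with all strictly lower entries `-1`. -/
def highamLhat (m : ℕ) : Matrix (Fin m) (Fin m) ℝ :=
  Matrix.of fun i j => if j < i then -1 else if i = j then 1 else 0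

/-- The Higham² matrix with `P = D = I` determined by the invertible upper triangular
matrix `Û`, i.e. `A = [[L̂, 0],[-𝟏ᵀ, 1]] * [[Û, u],[0, 2^(n-1)]]` with
`u = (1, 2, …, 2^(n-2))ᵀ`, viewed as an `n × n = (m+1) × (m+1)` matrix. -/
noncomputable def highamA {m : ℕ} (Uhat : Matrix (Fin m) (Fin m) ℝ) :
    Matrix (Fin (m + 1)) (Fin (m + 1)) ℝ :=
  Matrix.reindex finSumFinEquiv finSumFinEquiv
    (Matrix.fromBlocks (highamLhat m) 0 (Matrix.of fun (_ : Fin 1) (_ : Fin m) => (-1 : ℝ))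
        (Matrix.of fun (_ : Fin 1) (_ : Fin 1) => (1 : ℝ)) *
      Matrix.fromBlocks Uhat (Matrix.of fun (k : Fin m) (_ : Fin 1) => (2 : ℝ) ^ (k : ℕ)) 0
        (Matrix.of fun (_ : Fin 1) (_ : Fin 1) => (2 : ℝ) ^ m))

noncomputable section Aux16

def w16 : ℕ → ℝ := fun k => if k = 0 then 1 else 2 ^ (k - 1)

lemma sum_w16 (p : ℕ) (hp : 1 ≤ p) : ∑ k ∈ Finset.range p, w16 k = 2 ^ (p - 1) := by
  induction p with
  | zero => omega
  | succ q ih =>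
    rcases Nat.eq_zero_or_pos q with h | h
    · subst h; simp [w16]
    · rw [Finset.sum_range_succ, ih h]
      have hq : q ≠ 0 := by omega
      have hq1 : q - 1 + 1 = q := by omega
      simp only [w16, if_neg hq, Nat.add_sub_cancel]
      rw [← hq1, Nat.add_sub_cancel]
      ring

lemma sum_Lhat_w16 (m : ℕ) (p : Fin m) :
    ∑ k : Fin m, highamLhat m p k * w16 (k : ℕ) = if (p : ℕ) = 0 then 1 else 0 := by
  have hrw : ∀ k : Fin m, highamLhat m p k * w16 (k : ℕ)
      = (if (k : ℕ) < (p : ℕ) then (-1 : ℝ) else if (p : ℕ) = (k : ℕ) then 1 else 0) * w16 (k : ℕ) := by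
    intro k
    simp only [highamLhat, Matrix.of_apply, Fin.lt_def, Fin.ext_iff]
  rw [Finset.sum_congr rfl fun k _ => hrw k]
  rw [Fin.sum_univ_eq_sum_range
    (fun k => (if k < (p : ℕ) then (-1 : ℝ) else if (p : ℕ) = k then 1 else 0) * w16 k)]
  have hpm : (p : ℕ) + 1 ≤ m := p.isLt
  rw [← Finset.sum_range_add_sum_Ico _ hpm]
  have htail : ∑ k ∈ Finset.Ico ((p : ℕ) + 1) m,
      (if k < (p : ℕ) then (-1 : ℝ) else if (p : ℕ) = k then 1 else 0) * w16 k = 0 := by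
    refine Finset.sum_eq_zero fun k hk => ?_
    rw [Finset.mem_Ico] at hk
    rw [if_neg (by omega), if_neg (by omega), zero_mul]
  rw [htail, add_zero, Finset.sum_range_succ]
  rw [if_neg (lt_irrefl _), if_pos rfl, one_mul]
  have hhead : ∑ k ∈ Finset.range (p : ℕ),
      (if k < (p : ℕ) then (-1 : ℝ) else if (p : ℕ) = k then 1 else 0) * w16 k
      = -∑ k ∈ Finset.range (p : ℕ), w16 k := by
    rw [← Finset.sum_neg_distrib]
    refine Finset.sum_congr rfl fun k hk => ?_
    rw [Finset.mem_range] at hk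
    rw [if_pos hk]; ring
  rw [hhead]
  rcases Nat.eq_zero_or_pos (p : ℕ) with h0 | h0
  · simp [h0, w16]
  · rw [sum_w16 _ h0, if_neg (by omega)]
    have : w16 (p : ℕ) = 2 ^ ((p : ℕ) - 1) := by
      simp [w16, (show (p : ℕ) ≠ 0 by omega)]
    rw [this]; ring

def mu16 (a : ℕ) : Fin (a + 2) := ⟨a + 1, by omega⟩

def Lb16 (a : ℕ) : Matrix (Fin (a + 2) ⊕ Fin 1) (Fin (a + 2) ⊕ Fin 1) ℝ :=
  Matrix.fromBlocks (highamLhat (a + 2)) 0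
    (Matrix.of fun _ _ => (-1 : ℝ)) (Matrix.of fun _ _ => (1 : ℝ))

def Ub16 (a : ℕ) (Uhat : Matrix (Fin (a + 2)) (Fin (a + 2)) ℝ) :
    Matrix (Fin (a + 2) ⊕ Fin 1) (Fin (a + 2) ⊕ Fin 1) ℝ :=
  Matrix.fromBlocks Uhat (Matrix.of fun k _ => (2 : ℝ) ^ (k : ℕ)) 0
    (Matrix.of fun _ _ => (2 : ℝ) ^ (a + 2))

def Ec16 (a : ℕ) (c : ℝ) : Matrix (Fin (a + 2) ⊕ Fin 1) (Fin (a + 2) ⊕ Fin 1) ℝ :=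
  Matrix.single (Sum.inr (0 : Fin 1)) (Sum.inl (mu16 a)) c

def vv16 (a : ℕ) : Fin (a + 2) ⊕ Fin 1 → ℝ :=
  Sum.elim (fun k => w16 (k : ℕ)) (fun _ => (2 : ℝ) ^ (a + 1))

def N16 (a : ℕ) (ε : ℝ) : Matrix (Fin (a + 2) ⊕ Fin 1) (Fin (a + 2) ⊕ Fin 1) ℝ :=
  Matrix.of fun x y => if y = Sum.inl (mu16 a) then ε * vv16 a x else 0

def L3b16 (a : ℕ) (c : ℝ) : Matrix (Fin (a + 2) ⊕ Fin 1) (Fin (a + 2) ⊕ Fin 1) ℝ :=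
  Lb16 a + Ec16 a c

def U2b16 (a : ℕ) (Uhat : Matrix (Fin (a + 2)) (Fin (a + 2)) ℝ) (ε c : ℝ) :
    Matrix (Fin (a + 2) ⊕ Fin 1) (Fin (a + 2) ⊕ Fin 1) ℝ :=
  (1 - Ec16 a c) * (Ub16 a Uhat + N16 a ε)

lemma h1_16 (a : ℕ) (ε : ℝ) :
    Lb16 a * N16 a ε
      = Matrix.single (Sum.inl (0 : Fin (a + 2))) (Sum.inl (mu16 a)) ε := by
  ext x y
  rw [Matrix.mul_apply]
  by_cases hy : y = Sum.inl (mu16 a)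
  · subst hy
    rw [Fintype.sum_sum_type]
    cases x with
    | inl p =>
      have h2 : ∑ k : Fin 1, Lb16 a (Sum.inl p) (Sum.inr k) * N16 a ε (Sum.inr k) (Sum.inl (mu16 a)) = 0 := by
        simp [Lb16, N16]
      rw [h2, add_zero]
      have h3 : ∀ k : Fin (a + 2),
          Lb16 a (Sum.inl p) (Sum.inl k) * N16 a ε (Sum.inl k) (Sum.inl (mu16 a))
            = ε * (highamLhat (a + 2) p k * w16 (k : ℕ)) := by
        intro k
        have hn : N16 a ε (Sum.inl k) (Sum.inl (mu16 a)) = ε * w16 (k : ℕ) := by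
          simp [N16, vv16]
        rw [hn]
        simp only [Lb16, Matrix.fromBlocks_apply₁₁]
        ring
      rw [Finset.sum_congr rfl fun k _ => h3 k, ← Finset.mul_sum, sum_Lhat_w16]
      by_cases hp : (p : ℕ) = 0
      · have hp' : p = 0 := by
          apply Fin.ext; simpa using hp
        subst hp'
        simp
      · have hp' : (Sum.inl (0 : Fin (a + 2)) : Fin (a + 2) ⊕ Fin 1) ≠ Sum.inl p := by
          simp only [ne_eq, Sum.inl.injEq]
          intro h; exact hp (by rw [← h]; simp)
        rw [Matrix.single_apply_of_row_ne hp']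
        simp [hp]
    | inr q =>
      have h3 : ∀ k : Fin (a + 2),
          Lb16 a (Sum.inr q) (Sum.inl k) * N16 a ε (Sum.inl k) (Sum.inl (mu16 a))
            = -(ε * w16 (k : ℕ)) := by
        intro k
        have hn : N16 a ε (Sum.inl k) (Sum.inl (mu16 a)) = ε * w16 (k : ℕ) := by
          simp [N16, vv16]
        rw [hn]
        simp only [Lb16, Matrix.fromBlocks_apply₂₁, Matrix.of_apply]
        ring
      rw [Finset.sum_congr rfl fun k _ => h3 k]
      have h4 : ∑ k : Fin (a + 2), -(ε * w16 (k : ℕ)) = -(ε * 2 ^ (a + 1)) := by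
        rw [Finset.sum_neg_distrib, ← Finset.mul_sum,
          Fin.sum_univ_eq_sum_range (fun k => w16 k), sum_w16 _ (by omega)]
        norm_num
      rw [h4]
      have h5 : ∑ k : Fin 1, Lb16 a (Sum.inr q) (Sum.inr k) * N16 a ε (Sum.inr k) (Sum.inl (mu16 a)) = ε * 2 ^ (a + 1) := by
        simp [Lb16, N16, vv16]
      rw [h5]
      have h6 : (Sum.inl (0 : Fin (a + 2)) : Fin (a + 2) ⊕ Fin 1) ≠ Sum.inr q := by simp
      rw [Matrix.single_apply_of_row_ne h6]
      ring
  · have h0 : ∀ j, Lb16 a x j * N16 a ε j y = 0 := by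
      intro j; simp [N16, hy]
    rw [Finset.sum_eq_zero fun j _ => h0 j]
    exact (Matrix.single_apply_of_col_ne _ _ (fun h => hy h.symm) _).symm

lemma h2_16 (a : ℕ) (c : ℝ) : Lb16 a * Ec16 a c = Ec16 a c := by
  ext x y
  by_cases hy : y = Sum.inl (mu16 a)
  · subst hy
    rw [Ec16, Matrix.mul_single_apply_same]
    cases x with
    | inl p =>
      rw [Matrix.single_apply_of_row_ne (by simp)]
      simp [Lb16]
    | inr q =>
      have hq : q = 0 := Subsingleton.elim _ _
      subst hq
      rw [Matrix.single_apply_same]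
      simp [Lb16]
  · rw [Ec16, Matrix.mul_single_apply_of_ne _ _ _ _ _ hy,
      Matrix.single_apply_of_col_ne _ _ (fun h => hy h.symm)]

lemma key16 (a : ℕ) (Uhat : Matrix (Fin (a + 2)) (Fin (a + 2)) ℝ) (ε c : ℝ) :
    L3b16 a c * U2b16 a Uhat ε c
      = Lb16 a * Ub16 a Uhat
        + Matrix.single (Sum.inl (0 : Fin (a + 2))) (Sum.inl (mu16 a)) ε := by
  have hEc2 : Ec16 a c * Ec16 a c = 0 := by
    rw [Ec16]
    exact Matrix.single_mul_single_of_ne _ _ _ _ (by simp) c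
  have hfac : (Lb16 a + Ec16 a c) * (1 - Ec16 a c) = Lb16 a := by
    rw [mul_sub, mul_one, add_mul, h2_16, hEc2, add_zero, add_sub_cancel_right]
  rw [L3b16, U2b16, ← mul_assoc, hfac, mul_add, h1_16]

lemma U2b16_apply (a : ℕ) (Uhat : Matrix (Fin (a + 2)) (Fin (a + 2)) ℝ) (ε c : ℝ)
    (x y : Fin (a + 2) ⊕ Fin 1) :
    U2b16 a Uhat ε c x y = (Ub16 a Uhat + N16 a ε) x y
      - (if x = Sum.inr 0 then c * ((Ub16 a Uhat + N16 a ε) (Sum.inl (mu16 a)) y) else 0) := by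
  rw [U2b16, sub_mul, one_mul, Matrix.sub_apply]
  congr 1
  cases x with
  | inl p =>
    rw [if_neg (by simp), Ec16, Matrix.single_mul_apply_of_ne _ _ _ _ _ (by simp)]
  | inr q =>
    have hq : q = 0 := Subsingleton.elim _ _
    subst hq
    rw [if_pos rfl, Ec16, Matrix.single_mul_apply_same]

lemma IsLowerUnitri.blockTri {k : ℕ} {M : Matrix (Fin k) (Fin k) ℝ} (h : IsLowerUnitri M) :
    M.BlockTriangular OrderDual.toDual := fun i j hij => h.2 i j hij

lemma IsUpperTri.blockTri {k : ℕ} {M : Matrix (Fin k) (Fin k) ℝ} (h : IsUpperTri M) :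
    M.BlockTriangular id := fun i j hij => h i j hij

lemma IsLowerUnitri.det_eq_one {k : ℕ} {M : Matrix (Fin k) (Fin k) ℝ} (h : IsLowerUnitri M) :
    M.det = 1 := by
  rw [Matrix.det_of_lowerTriangular M h.blockTri]
  exact Finset.prod_eq_one fun i _ => h.1 i

end Aux16

lemma stdBasis_submatrix16 {n n' : Type*} [DecidableEq n] [DecidableEq n']
    (e : n ≃ n') (x y : n) (ε : ℝ) :
    Matrix.single (e x) (e y) ε
      = (Matrix.single x y ε).submatrix e.symm e.symm := by
  ext i j
  simp only [Matrix.submatrix_apply, Matrix.single, Matrix.of_apply,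
    Equiv.apply_eq_iff_eq_symm_apply]

lemma submatrix_add16 {α l o m n : Type*} [Add α] (A B : Matrix m n α)
    (f : l → m) (g : o → n) :
    A.submatrix f g + B.submatrix f g = (A + B).submatrix f g := by
  ext i j; simp

noncomputable section Aux16b

def LL16 (a : ℕ) (c : ℝ) : Matrix (Fin (a + 2 + 1)) (Fin (a + 2 + 1)) ℝ :=
  (L3b16 a c).submatrix finSumFinEquiv.symm finSumFinEquiv.symm

def UU16 (a : ℕ) (Uhat : Matrix (Fin (a + 2)) (Fin (a + 2)) ℝ) (ε c : ℝ) :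
    Matrix (Fin (a + 2 + 1)) (Fin (a + 2 + 1)) ℝ :=
  (U2b16 a Uhat ε c).submatrix finSumFinEquiv.symm finSumFinEquiv.symm

lemma hcs16 (a : ℕ) (p : Fin (a + 2)) :
    finSumFinEquiv.symm (Fin.castSucc p) = (Sum.inl p : Fin (a + 2) ⊕ Fin 1) :=
  finSumFinEquiv_symm_apply_castAdd p

lemma hls16 (a : ℕ) :
    finSumFinEquiv.symm (Fin.last (a + 2)) = (Sum.inr 0 : Fin (a + 2) ⊕ Fin 1) :=
  finSumFinEquiv_symm_last

lemma w16_succ (a : ℕ) : w16 (a + 1) = 2 ^ a := by simp [w16]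

lemma key16' (a : ℕ) (Uhat : Matrix (Fin (a + 2)) (Fin (a + 2)) ℝ) (ε c : ℝ) :
    LL16 a c * UU16 a Uhat ε c
      = (Lb16 a * Ub16 a Uhat).submatrix
          (⇑finSumFinEquiv.symm) (⇑finSumFinEquiv.symm)
        + (Matrix.single (Sum.inl (0 : Fin (a + 2))) (Sum.inl (mu16 a)) ε).submatrix
            (⇑finSumFinEquiv.symm) (⇑finSumFinEquiv.symm) :=
  (Matrix.submatrix_mul_equiv (L3b16 a c) (U2b16 a Uhat ε c) _ finSumFinEquiv.symm _).trans
    ((congrArg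
        (fun M : Matrix (Fin (a + 2) ⊕ Fin 1) (Fin (a + 2) ⊕ Fin 1) ℝ =>
          M.submatrix (⇑finSumFinEquiv.symm) (⇑finSumFinEquiv.symm))
        (key16 a Uhat ε c)).trans
      (submatrix_add16 _ _ _ _).symm)

lemma LL16_unitri (a : ℕ) (c : ℝ) : IsLowerUnitri (LL16 a c) := by
  constructor
  · intro i
    induction i using Fin.lastCases with
    | last =>
      rw [LL16, Matrix.submatrix_apply, hls16]
      have : L3b16 a c (Sum.inr 0) (Sum.inr 0) = 1 := by
        simp only [L3b16, Matrix.add_apply, Lb16, Matrix.fromBlocks_apply₂₂, Ec16]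
        rw [Matrix.single_apply_of_col_ne _ _ (by simp) _]
        simp
      exact this
    | cast p =>
      rw [LL16, Matrix.submatrix_apply, hcs16]
      have : L3b16 a c (Sum.inl p) (Sum.inl p) = 1 := by
        simp only [L3b16, Matrix.add_apply, Lb16, Matrix.fromBlocks_apply₁₁, Ec16]
        rw [Matrix.single_apply_of_row_ne (by simp)]
        simp [highamLhat]
      exact this
  · intro i j hij
    induction j using Fin.lastCases with
    | last =>
      induction i using Fin.lastCases with
      | last => exact absurd hij (lt_irrefl _)
      | cast p =>
        rw [LL16, Matrix.submatrix_apply, hls16, hcs16]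
        have : L3b16 a c (Sum.inl p) (Sum.inr 0) = 0 := by
          simp only [L3b16, Matrix.add_apply, Lb16, Matrix.fromBlocks_apply₁₂, Ec16]
          rw [Matrix.single_apply_of_row_ne (by simp)]
          simp
        exact this
    | cast q =>
      induction i using Fin.lastCases with
      | last => exact absurd (hij.trans (Fin.castSucc_lt_last q)) (lt_irrefl _)
      | cast p =>
        have hpq : p < q := by rwa [Fin.castSucc_lt_castSucc_iff] at hij
        rw [LL16, Matrix.submatrix_apply, hcs16, hcs16]
        have : L3b16 a c (Sum.inl p) (Sum.inl q) = 0 := by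
          simp only [L3b16, Matrix.add_apply, Lb16, Matrix.fromBlocks_apply₁₁, Ec16]
          rw [Matrix.single_apply_of_row_ne (by simp)]
          simp only [highamLhat, Matrix.of_apply]
          rw [if_neg (lt_asymm hpq), if_neg (ne_of_lt hpq)]
          ring
        exact this

lemma UU16_upper (a : ℕ) (Uhat : Matrix (Fin (a + 2)) (Fin (a + 2)) ℝ) (ε c : ℝ)
    (hUhat : IsUpperTri Uhat)
    (hcd : c * (Uhat (mu16 a) (mu16 a) + ε * 2 ^ a) = ε * 2 ^ (a + 1)) :
    IsUpperTri (UU16 a Uhat ε c) := by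
  intro i j hji
  induction i using Fin.lastCases with
  | last =>
    induction j using Fin.lastCases with
    | last => exact absurd hji (lt_irrefl _)
    | cast q =>
      rw [UU16, Matrix.submatrix_apply, hls16, hcs16, U2b16_apply, if_pos rfl]
      by_cases hq : q = mu16 a
      · subst hq
        have h1 : (Ub16 a Uhat + N16 a ε) (Sum.inr 0) (Sum.inl (mu16 a)) = ε * 2 ^ (a + 1) := by
          simp [Ub16, N16, vv16, Matrix.add_apply]
        have h2 : (Ub16 a Uhat + N16 a ε) (Sum.inl (mu16 a)) (Sum.inl (mu16 a))
            = Uhat (mu16 a) (mu16 a) + ε * 2 ^ a := by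
          simp only [Matrix.add_apply, Ub16, Matrix.fromBlocks_apply₁₁, N16, Matrix.of_apply,
            if_pos rfl, vv16, Sum.elim_inl]
          have hcoe : ((mu16 a : Fin (a + 2)) : ℕ) = a + 1 := rfl
          rw [hcoe, w16_succ]
          simp
        rw [h1, h2, hcd]
        ring
      · have hqμ : (Sum.inl q : Fin (a + 2) ⊕ Fin 1) ≠ Sum.inl (mu16 a) := by simpa using hq
        have hqlt : q < mu16 a := by
          rw [Fin.lt_def]
          have h := q.isLt
          have hne : (q : ℕ) ≠ a + 1 := fun hc => hq (Fin.ext (by simp [mu16, hc]))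
          simp only [mu16]
          omega
        have h1 : (Ub16 a Uhat + N16 a ε) (Sum.inr 0) (Sum.inl q) = 0 := by
          simp [Ub16, N16, hqμ, Matrix.add_apply]
        have h2 : (Ub16 a Uhat + N16 a ε) (Sum.inl (mu16 a)) (Sum.inl q) = 0 := by
          have hU0 : Uhat (mu16 a) q = 0 := hUhat _ _ hqlt
          simp [Ub16, N16, hqμ, hU0, Matrix.add_apply]
        rw [h1, h2]
        ring
  | cast p =>
    induction j using Fin.lastCases with
    | last => exact absurd (hji.trans (Fin.castSucc_lt_last p)) (lt_irrefl _)
    | cast q =>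
      have hqp : q < p := by rwa [Fin.castSucc_lt_castSucc_iff] at hji
      rw [UU16, Matrix.submatrix_apply, hcs16, hcs16, U2b16_apply, if_neg (by simp), sub_zero]
      have hqμ : (Sum.inl q : Fin (a + 2) ⊕ Fin 1) ≠ Sum.inl (mu16 a) := by
        simp only [ne_eq, Sum.inl.injEq]
        intro hc
        have h1 := p.isLt
        have h2 : (q : ℕ) = a + 1 := by rw [hc]; rfl
        have h3 : (q : ℕ) < (p : ℕ) := hqp
        omega
      have hU0 : Uhat p q = 0 := hUhat _ _ hqp
      simp [Ub16, N16, hqμ, hU0, Matrix.add_apply]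

lemma UU16_diag (a : ℕ) (Uhat : Matrix (Fin (a + 2)) (Fin (a + 2)) ℝ) (ε c : ℝ)
    (p : Fin (a + 2)) :
    UU16 a Uhat ε c (Fin.castSucc p) (Fin.castSucc p)
      = Uhat p p + (if p = mu16 a then ε * 2 ^ a else 0) := by
  rw [UU16, Matrix.submatrix_apply, hcs16, U2b16_apply, if_neg (by simp), sub_zero]
  by_cases hp : p = mu16 a
  · subst hp
    rw [if_pos rfl]
    simp only [Matrix.add_apply, Ub16, Matrix.fromBlocks_apply₁₁, N16, Matrix.of_apply,
      if_pos rfl, vv16, Sum.elim_inl]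
    have hcoe : ((mu16 a : Fin (a + 2)) : ℕ) = a + 1 := rfl
    rw [hcoe, w16_succ]
    simp
  · rw [if_neg hp]
    have hpμ : (Sum.inl p : Fin (a + 2) ⊕ Fin 1) ≠ Sum.inl (mu16 a) := by simpa using hp
    simp [Ub16, N16, hpμ, Matrix.add_apply]

lemma UU16_last (a : ℕ) (Uhat : Matrix (Fin (a + 2)) (Fin (a + 2)) ℝ) (ε c : ℝ) :
    UU16 a Uhat ε c (Fin.last (a + 2)) (Fin.last (a + 2))
      = 2 ^ (a + 2) - c * 2 ^ (a + 1) := by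
  rw [UU16, Matrix.submatrix_apply, hls16, U2b16_apply, if_pos rfl]
  have h1 : (Ub16 a Uhat + N16 a ε) (Sum.inr 0) (Sum.inr 0) = 2 ^ (a + 2) := by
    simp [Ub16, N16, Matrix.add_apply]
  have h2 : (Ub16 a Uhat + N16 a ε) (Sum.inl (mu16 a)) (Sum.inr 0) = 2 ^ (a + 1) := by
    have hcoe : ((mu16 a : Fin (a + 2)) : ℕ) = a + 1 := rfl
    simp [Ub16, N16, Matrix.add_apply, hcoe]
  rw [h1, h2]

lemma lastPivot16 {n : ℕ} (L₁ U₁ L₂ U₂ : Matrix (Fin (n + 1)) (Fin (n + 1)) ℝ)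
    (hL₁ : IsLowerUnitri L₁) (hU₁ : IsUpperTri U₁)
    (hL₂ : IsLowerUnitri L₂) (hU₂ : IsUpperTri U₂)
    (hdet : U₂.det ≠ 0)
    (heq : L₁ * U₁ = L₂ * U₂) :
    U₁ (Fin.last n) (Fin.last n) = U₂ (Fin.last n) (Fin.last n) := by
  have hdetL₁ : L₁.det = 1 := hL₁.det_eq_one
  have hdetL₂ : L₂.det = 1 := hL₂.det_eq_one
  have hdetM : L₁.det * U₁.det = L₂.det * U₂.det := by
    rw [← Matrix.det_mul, ← Matrix.det_mul, heq]
  have hU₁det : U₁.det = U₂.det := by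
    rwa [hdetL₁, hdetL₂, one_mul, one_mul] at hdetM
  have hdetU₁ : U₁.det ≠ 0 := by rw [hU₁det]; exact hdet
  have hL₂isunit : IsUnit L₂.det := by rw [hdetL₂]; exact isUnit_one
  haveI : Invertible L₂ := L₂.invertibleOfIsUnitDet hL₂isunit
  haveI : Invertible U₁ := U₁.invertibleOfIsUnitDet (isUnit_iff_ne_zero.mpr hdetU₁)
  have hL₂inv : (L₂⁻¹).BlockTriangular OrderDual.toDual :=
    Matrix.blockTriangular_inv_of_blockTriangular hL₂.blockTri
  have hU₁inv : (U₁⁻¹).BlockTriangular id :=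
    Matrix.blockTriangular_inv_of_blockTriangular hU₁.blockTri
  have hXU : (L₂⁻¹ * L₁) * U₁ = U₂ := by
    rw [mul_assoc, heq, ← mul_assoc, Matrix.nonsing_inv_mul _ hL₂isunit, one_mul]
  have hX2 : L₂⁻¹ * L₁ = U₂ * U₁⁻¹ := by
    rw [← hXU, mul_assoc, Matrix.mul_nonsing_inv _ (isUnit_iff_ne_zero.mpr hdetU₁), mul_one]
  have hXupper : (L₂⁻¹ * L₁).BlockTriangular id := by
    rw [hX2]; exact hU₂.blockTri.mul hU₁inv
  have hinvll : L₂⁻¹ (Fin.last n) (Fin.last n) = 1 := by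
    have h1 := Matrix.mul_nonsing_inv L₂ hL₂isunit
    have h2 : (L₂ * L₂⁻¹) (Fin.last n) (Fin.last n) = 1 := by
      rw [h1]; simp [Matrix.one_apply]
    rw [Matrix.mul_apply, Finset.sum_eq_single (Fin.last n)] at h2
    · rw [hL₂.1 (Fin.last n), one_mul] at h2
      exact h2
    · intro k _ hk
      have hkl : k < Fin.last n := lt_of_le_of_ne (Fin.le_last k) hk
      have hz : L₂⁻¹ k (Fin.last n) = 0 := hL₂inv hkl
      rw [hz, mul_zero]
    · intro h; exact absurd (Finset.mem_univ _) h
  have hXll : (L₂⁻¹ * L₁) (Fin.last n) (Fin.last n) = 1 := by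
    rw [Matrix.mul_apply, Finset.sum_eq_single (Fin.last n)]
    · rw [hinvll, hL₁.1, one_mul]
    · intro k _ hk
      rw [hL₁.2 k (Fin.last n) (lt_of_le_of_ne (Fin.le_last k) hk), mul_zero]
    · intro h; exact absurd (Finset.mem_univ _) h
  have hfin : U₂ (Fin.last n) (Fin.last n) = U₁ (Fin.last n) (Fin.last n) := by
    rw [← hXU, Matrix.mul_apply, Finset.sum_eq_single (Fin.last n)]
    · rw [hXll, one_mul]
    · intro k _ hk
      have hkl : k < Fin.last n := lt_of_le_of_ne (Fin.le_last k) hk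
      have hz : (L₂⁻¹ * L₁) (Fin.last n) k = 0 := hXupper hkl
      rw [hz, zero_mul]
    · intro h; exact absurd (Finset.mem_univ _) h
  exact hfin.symm

end Aux16b

theorem stmt_16 {m : ℕ} (hm : 2 ≤ m)
    (Uhat : Matrix (Fin m) (Fin m) ℝ) (hUhat : IsUpperTri Uhat) (hUdet : IsUnit Uhat.det)
    (ε : ℝ)
    (L' U' : Matrix (Fin (m + 1)) (Fin (m + 1)) ℝ)
    (hL' : IsLowerUnitri L') (hU' : IsUpperTri U')
    (hfact : highamA Uhat +
        Matrix.single (⟨0, by omega⟩ : Fin (m + 1)) (⟨m - 1, by omega⟩ : Fin (m + 1)) ε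
      = L' * U')
    (hden : ε + ((2 : ℝ) ^ (m - 2))⁻¹ * Uhat ⟨m - 1, by omega⟩ ⟨m - 1, by omega⟩ ≠ 0) :
    U' (Fin.last m) (Fin.last m)
      = 4 * Uhat ⟨m - 1, by omega⟩ ⟨m - 1, by omega⟩
        / (ε + ((2 : ℝ) ^ (m - 2))⁻¹ * Uhat ⟨m - 1, by omega⟩ ⟨m - 1, by omega⟩) := by
  obtain ⟨a, rfl⟩ : ∃ a, m = a + 2 := ⟨m - 2, by omega⟩
  have e2 : (⟨a + 2 - 1, by omega⟩ : Fin (a + 2)) = mu16 a := by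
    simp only [mu16, Fin.mk.injEq]; omega
  have ea : a + 2 - 2 = a := by omega
  rw [e2, ea] at hden ⊢
  have h2a : (2 : ℝ) ^ a ≠ 0 := pow_ne_zero _ two_ne_zero
  set d : ℝ := Uhat (mu16 a) (mu16 a) + ε * 2 ^ a with hd_def
  have hd : d ≠ 0 := by
    rw [hd_def]
    have hrw : Uhat (mu16 a) (mu16 a) + ε * 2 ^ a
        = 2 ^ a * (ε + ((2 : ℝ) ^ a)⁻¹ * Uhat (mu16 a) (mu16 a)) := by
      field_simp; ring
    rw [hrw]
    exact mul_ne_zero h2a hden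
  set c : ℝ := ε * 2 ^ (a + 1) / d with hc_def
  have hcd : c * d = ε * 2 ^ (a + 1) := by
    rw [hc_def]; field_simp
  have hE0 : finSumFinEquiv (Sum.inl (0 : Fin (a + 2))) = (⟨0, by omega⟩ : Fin (a + 2 + 1)) := by
    apply Fin.ext; simp
  have hE1 : finSumFinEquiv (Sum.inl (mu16 a)) = (⟨a + 2 - 1, by omega⟩ : Fin (a + 2 + 1)) := by
    apply Fin.ext; simp [mu16]
  have hA : highamA Uhat
      = (Lb16 a * Ub16 a Uhat).submatrix (⇑finSumFinEquiv.symm) (⇑finSumFinEquiv.symm) := rfl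
  have hstd' := stdBasis_submatrix16
    (finSumFinEquiv : Fin (a + 2) ⊕ Fin 1 ≃ Fin (a + 2 + 1))
    (Sum.inl (0 : Fin (a + 2))) (Sum.inl (mu16 a)) ε
  rw [hE0, hE1] at hstd'
  have key : highamA Uhat +
      Matrix.single (⟨0, by omega⟩ : Fin (a + 2 + 1))
        (⟨a + 2 - 1, by omega⟩ : Fin (a + 2 + 1)) ε = LL16 a c * UU16 a Uhat ε c :=
    (congrArg₂ (· + ·) hA hstd').trans (key16' a Uhat ε c).symm
  have heq : L' * U' = LL16 a c * UU16 a Uhat ε c := hfact.symm.trans key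
  have hval : (2 : ℝ) ^ (a + 2) - c * 2 ^ (a + 1)
      = 4 * Uhat (mu16 a) (mu16 a)
        / (ε + ((2 : ℝ) ^ a)⁻¹ * Uhat (mu16 a) (mu16 a)) := by
    rw [hc_def, hd_def]
    have h4 : Uhat (mu16 a) (mu16 a) + ε * 2 ^ a ≠ 0 := by rw [← hd_def]; exact hd
    have h5 : ε + ((2 : ℝ) ^ a)⁻¹ * Uhat (mu16 a) (mu16 a)
        = (Uhat (mu16 a) (mu16 a) + ε * 2 ^ a) / 2 ^ a := by
      field_simp; ring
    rw [h5, div_div_eq_mul_div]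
    field_simp
    ring
  have hUdiag_ne : ∀ p : Fin (a + 2), Uhat p p ≠ 0 := by
    have hdet : Uhat.det = ∏ i, Uhat i i := Matrix.det_of_upperTriangular hUhat.blockTri
    intro p hp
    have hne : Uhat.det ≠ 0 := hUdet.ne_zero
    rw [hdet] at hne
    exact hne (Finset.prod_eq_zero (Finset.mem_univ p) hp)
  have hUUtri : IsUpperTri (UU16 a Uhat ε c) := by
    refine UU16_upper a Uhat ε c hUhat ?_
    rw [← hd_def]; exact hcd
  have hdetUU : (UU16 a Uhat ε c).det ≠ 0 := by
    rw [Matrix.det_of_upperTriangular hUUtri.blockTri, Finset.prod_ne_zero_iff]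
    intro i _
    induction i using Fin.lastCases with
    | last =>
      rw [UU16_last, hval]
      exact div_ne_zero (mul_ne_zero four_ne_zero (hUdiag_ne (mu16 a))) hden
    | cast p =>
      rw [UU16_diag]
      by_cases hp : p = mu16 a
      · rw [if_pos hp, hp, ← hd_def]; exact hd
      · rw [if_neg hp, add_zero]; exact hUdiag_ne p
  have hpivot := lastPivot16 L' U' (LL16 a c) (UU16 a Uhat ε c)
    hL' hU' (LL16_unitri a c) hUUtri hdetUU heq
  rw [hpivot, UU16_last]
  exact hval
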